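/- arXiv:2511.06454 — 3 statements merged into one kernel-verified Lean document; each statement's English description precedes it below -/
import Mathlib

section
/- If γ lies in the simplex and γ_j < (2m)^{-1}(Φ̃_j + 1/2)^{-1} for some index j, then 1 + Δ_j(γ) − ∑_{s=1}^m γ_s Δ_s(γ) > 1; consequently, if additionally γ_j > 0 and 1 + Δ_s(γ) > 0 for all s, the updated coordinate γ'_j = γ_j(1 + Δ_j(γ))/∑_s γ_s(1 + Δ_s(γ)) satisfies γ'_j > γ_j. -/
open Finset

theorem small_coordinate_increases (m : ℕ) (hm : 0 < m) (Φ : Fin m → ℝ)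
    (hΦ : ∀ j, Φ j ∈ Set.Icc (0:ℝ) 1)
    (Δ : (Fin m → ℝ) → Fin m → ℝ)
    (hΔ : ∀ γ j, Δ γ j = -γ j * (Φ j + 1/2) + (2/m) * ∑ s, γ s * Φ s)
    (γ : Fin m → ℝ) (hpos : ∀ j, 0 ≤ γ j) (hsum : ∑ j, γ j = 1)
    (j : Fin m) (hsmall : γ j < (2 * m : ℝ)⁻¹ * (Φ j + 1/2)⁻¹) :
    1 + Δ γ j - ∑ s, γ s * Δ γ s > 1 ∧
    (0 < γ j → (∀ s, 0 < 1 + Δ γ s) →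
      γ j * (1 + Δ γ j) / ∑ s, γ s * (1 + Δ γ s) > γ j) := by
  have hm' : (0:ℝ) < m := by exact_mod_cast hm
  have hΦj := hΦ j
  have hΦjpos : (0:ℝ) < Φ j + 1/2 := by
    have := hΦj.1; linarith
  -- compute ∑ γ s * Δ γ s
  have h1 : ∑ s, γ s * Δ γ s =
      -(∑ s, (γ s)^2 * (Φ s + 1/2)) + (2/m) * ∑ s, γ s * Φ s := by
    have : ∑ s, γ s * Δ γ s =
        ∑ s, (-((γ s)^2 * (Φ s + 1/2)) + γ s * ((2/m) * ∑ t, γ t * Φ t)) := by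
      refine Finset.sum_congr rfl fun s _ => ?_
      rw [hΔ]; ring
    rw [this, Finset.sum_add_distrib, Finset.sum_neg_distrib, ← Finset.sum_mul, hsum]
    ring
  -- sum of squares bound
  have hsq : (1:ℝ)/m ≤ ∑ s, (γ s)^2 := by
    have := sq_sum_le_card_mul_sum_sq (s := Finset.univ) (f := γ)
    rw [hsum] at this
    simp only [Finset.card_univ, Fintype.card_fin] at this
    rw [div_le_iff₀ hm']
    nlinarith
  have hlb : (1:ℝ)/(2*m) ≤ ∑ s, (γ s)^2 * (Φ s + 1/2) := by
    have h2 : ∑ s, (γ s)^2 * (1/2:ℝ) ≤ ∑ s, (γ s)^2 * (Φ s + 1/2) := by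
      refine Finset.sum_le_sum fun s _ => ?_
      have := (hΦ s).1
      nlinarith [sq_nonneg (γ s)]
    rw [← Finset.sum_mul] at h2
    calc (1:ℝ)/(2*m) = (1/m) * (1/2) := by ring
      _ ≤ (∑ s, (γ s)^2) * (1/2) := by linarith
      _ ≤ _ := h2
  have hsm : γ j * (Φ j + 1/2) < 1/(2*m) := by
    have := mul_lt_mul_of_pos_right hsmall hΦjpos
    rw [mul_assoc, inv_mul_cancel₀ (ne_of_gt hΦjpos), mul_one] at this
    rw [show (1:ℝ)/(2*m) = (2*(m:ℝ))⁻¹ by rw [one_div]]; exact this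
  have key : 0 < Δ γ j - ∑ s, γ s * Δ γ s := by
    rw [h1, hΔ]
    have : (∑ s, (γ s)^2 * (Φ s + 1/2)) - γ j * (Φ j + 1/2) > 0 := by linarith
    linarith
  constructor
  · linarith
  · intro hγj hΔpos
    have hD : ∑ s, γ s * (1 + Δ γ s) = 1 + ∑ s, γ s * Δ γ s := by
      simp only [mul_add, mul_one, Finset.sum_add_distrib, hsum]
    have hDpos : 0 < ∑ s, γ s * (1 + Δ γ s) := by
      have : γ j * (1 + Δ γ j) ≤ ∑ s, γ s * (1 + Δ γ s) :=
        Finset.single_le_sum (fun s _ => mul_nonneg (hpos s) (hΔpos s).le)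
          (Finset.mem_univ j)
      nlinarith [hΔpos j]
    rw [gt_iff_lt, lt_div_iff₀ hDpos, hD]
    have : 1 + ∑ s, γ s * Δ γ s < 1 + Δ γ j := by linarith
    nlinarith
end

section
/- The vector γ* with γ*_j = ((Φ̃_j + 1/2) ∑_{s=1}^m (Φ̃_s + 1/2)^{-1})^{-1} lies in the relative interior of the standard simplex and is a fixed point of the replicator update, i.e., Δ_j(γ*) = ∑_{s=1}^m γ*_s Δ_s(γ*) for all j. -/
open Finset

theorem gamma_star_is_interior_fixed_point (m : ℕ) (hm : 0 < m) (Φ : Fin m → ℝ)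
    (hΦ : ∀ j, Φ j ∈ Set.Icc (0:ℝ) 1)
    (Δ : (Fin m → ℝ) → Fin m → ℝ)
    (hΔ : ∀ γ j, Δ γ j = -γ j * (Φ j + 1/2) + (2/m) * ∑ s, γ s * Φ s)
    (γstar : Fin m → ℝ)
    (hγstar : ∀ j, γstar j = ((Φ j + 1/2) * ∑ s, (Φ s + 1/2)⁻¹)⁻¹) :
    (∀ j, 0 < γstar j) ∧ (∑ j, γstar j = 1) ∧
    (∀ j, Δ γstar j = ∑ s, γstar s * Δ γstar s) := by
  have hpos : ∀ j, (0:ℝ) < Φ j + 1/2 := fun j => by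
    have := (hΦ j).1; linarith
  have hSpos : (0:ℝ) < ∑ s, (Φ s + 1/2)⁻¹ := by
    apply Finset.sum_pos (fun s _ => inv_pos.mpr (hpos s))
    exact Finset.univ_nonempty_iff.mpr (Fin.pos_iff_nonempty.mp hm)
  have hgpos : ∀ j, 0 < γstar j := fun j => by
    rw [hγstar j]
    exact inv_pos.mpr (mul_pos (hpos j) hSpos)
  have hsum : ∑ j, γstar j = 1 := by
    have : ∀ j ∈ Finset.univ, γstar j
        = (∑ s, (Φ s + 1/2)⁻¹)⁻¹ * (Φ j + 1/2)⁻¹ := fun j _ => by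
      rw [hγstar j, mul_inv, mul_comm]
    rw [Finset.sum_congr rfl this, ← Finset.mul_sum,
      inv_mul_cancel₀ (ne_of_gt hSpos)]
  refine ⟨hgpos, hsum, ?_⟩
  have hconst : ∀ j, γstar j * (Φ j + 1/2) = (∑ s, (Φ s + 1/2)⁻¹)⁻¹ := fun j => by
    rw [hγstar j, mul_inv, mul_comm ((Φ j + 1/2)⁻¹), mul_assoc,
      inv_mul_cancel₀ (ne_of_gt (hpos j)), mul_one]
  have hΔconst : ∀ j, Δ γstar j
      = -(∑ s, (Φ s + 1/2)⁻¹)⁻¹ + (2/m) * ∑ s, γstar s * Φ s := fun j => by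
    rw [hΔ, neg_mul, hconst j]
  intro j
  rw [hΔconst j]
  have : ∀ s ∈ Finset.univ, γstar s * Δ γstar s
      = γstar s * (-(∑ s, (Φ s + 1/2)⁻¹)⁻¹ + (2/m) * ∑ s, γstar s * Φ s) :=
    fun s _ => by rw [hΔconst s]
  rw [Finset.sum_congr rfl this, ← Finset.sum_mul, hsum, one_mul]
end

section
/- Uniqueness of the interior equilibrium: if γ ∈ relint K^{m-1} satisfies Δ_j(γ) = Δ_k(γ) for all indices j, k, then γ_j = ((Φ̃_j + 1/2) ∑_{s=1}^m (Φ̃_s + 1/2)^{-1})^{-1} for all j. -/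
open Finset

theorem interior_equilibrium_unique (m : ℕ) (hm : 0 < m) (Φ : Fin m → ℝ)
    (hΦ : ∀ j, Φ j ∈ Set.Icc (0:ℝ) 1)
    (Δ : (Fin m → ℝ) → Fin m → ℝ)
    (hΔ : ∀ γ j, Δ γ j = -γ j * (Φ j + 1/2) + (2/m) * ∑ s, γ s * Φ s)
    (γ : Fin m → ℝ) (hpos : ∀ j, 0 < γ j) (hsum : ∑ j, γ j = 1)
    (heq : ∀ j k, Δ γ j = Δ γ k) :
    ∀ j, γ j = ((Φ j + 1/2) * ∑ s, (Φ s + 1/2)⁻¹)⁻¹ := by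
  have hΦpos : ∀ j, 0 < Φ j + 1/2 := fun j => by
    have := (hΦ j).1; linarith
  set k0 : Fin m := ⟨0, hm⟩
  set c : ℝ := γ k0 * (Φ k0 + 1/2) with hc
  have hconst : ∀ j, γ j * (Φ j + 1/2) = c := by
    intro j
    have h := heq j k0
    rw [hΔ, hΔ] at h
    nlinarith [h]
  have hγ : ∀ j, γ j = c * (Φ j + 1/2)⁻¹ := by
    intro j
    exact (eq_mul_inv_iff_mul_eq₀ (hΦpos j).ne').mpr (hconst j)
  have hsum' : c * ∑ s, (Φ s + 1/2)⁻¹ = 1 := by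
    rw [Finset.mul_sum]
    exact (Finset.sum_congr rfl fun s _ => (hγ s).symm).trans hsum
  have hspos : 0 < ∑ s, (Φ s + 1/2)⁻¹ :=
    Finset.sum_pos (fun s _ => inv_pos.mpr (hΦpos s)) (by have : Nonempty (Fin m) := ⟨k0⟩; exact Finset.univ_nonempty)
  have hcpos : 0 < c := mul_pos (hpos k0) (hΦpos k0)
  intro j
  rw [hγ j, mul_inv]
  have : c = (∑ s, (Φ s + 1/2)⁻¹)⁻¹ := eq_inv_of_mul_eq_one_left (by linarith [hsum'])
  rw [this]; ring
end
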